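/- Let n ≥ m−1 and let w be a non-empty common finite prefix of the two infinite words z_{n−(m−1)} · Q(n+1) Q(n+2) Q(n+3) ⋯ and Q(n+2) Q(n+3) Q(n+4) ⋯. Then Q(n+1) · w is not a palindrome. -/

import Mathlib

/-- The finite word `u` occurs at position `j` in the infinite word `w`. -/
def OccursAt (u : List ℕ) (w : ℕ → ℕ) (j : ℕ) : Prop :=
  ∀ i < u.length, w (j + i) = u.getD i 0

/-- The finite word `u` is a prefix of the infinite word `w`. -/
def InfPrefix (u : List ℕ) (w : ℕ → ℕ) : Prop :=
  OccursAt u w 0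

/-- The suffix of the infinite word `w` starting at position `j`. -/
def suffixFrom (w : ℕ → ℕ) (j : ℕ) : ℕ → ℕ :=
  fun i => w (j + i)

/-- The finite word `u` is a palindrome. -/
def Pal (u : List ℕ) : Prop := u.reverse = u
/-- The `m`-bonacci morphism `φ_m` on letters:
`φ_m(k) = 0·(k+1)` for `0 ≤ k ≤ m-2`, and `φ_m(m-1) = 0`. -/
def phiL (m a : ℕ) : List ℕ := if a = m - 1 then [0] else [0, a + 1]

/-- The `m`-bonacci morphism applied to a finite word. -/
def phiW (m : ℕ) (u : List ℕ) : List ℕ := u.flatMap (phiL m)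

/-- The iterates `h n = φ_mⁿ(0)`. -/
def hword (m : ℕ) : ℕ → List ℕ
  | 0 => [0]
  | n + 1 => phiW m (hword m n)

/-- The `m`-bonacci word, the infinite fixed point of `φ_m` beginning with `0`
(its `i`-th letter is the `i`-th letter of any sufficiently long iterate `φ_mⁿ(0)`). -/
def mbon (m : ℕ) : ℕ → ℕ := fun i => (hword m (i + 1)).getD i 0

/-- Auxiliary course-of-values construction for the p-singular words:
`zsAux m (k+1) i` gives the correct value of the (index-shifted) p-singular word
`z_{i-1}` for every `i ≤ k`. -/
def zsAux (m : ℕ) : ℕ → ℕ → List ℕ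
  | 0, _ => []
  | k + 1, i =>
    if i < k then zsAux m k i
    else if i = 0 then []
    else if i = 1 then [0]
    else if i ≤ m then
      -- here `i = n+1` with `1 ≤ n ≤ m-1`:
      -- `z_n = z_{n-2} z_{n-3} ⋯ z_1 z_0 · n · z_0 z_1 ⋯ z_{n-3} z_{n-2}`
      (((List.range (i - 2)).map (fun j => zsAux m k (i - 2 - j))).flatten)
        ++ [i - 1]
        ++ (((List.range (i - 2)).map (fun j => zsAux m k (1 + j))).flatten)
    else
      -- here `i = n+1` with `n ≥ m`:
      -- `z_n = z_{n-2} ⋯ z_{n-(m-1)} · z_{n-m} · z_{n-(m+1)} · z_{n-m} · z_{n-(m-1)} ⋯ z_{n-2}`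
      (((List.range (m - 2)).map (fun j => zsAux m k (i - 2 - j))).flatten)
        ++ zsAux m k (i - m) ++ zsAux m k (i - m - 1) ++ zsAux m k (i - m)
        ++ (((List.range (m - 2)).map (fun j => zsAux m k (i - m + 1 + j))).flatten)

/-- The (index-shifted) p-singular words for the `m`-bonacci word:
`zsw m 0 = z₋₁ = ε`, and `zsw m (n+1) = zₙ` for `n ≥ 0`, where
`z₀ = 0`, `zₙ = z_{n-2} z_{n-3} ⋯ z_1 z_0 · n · z_0 z_1 ⋯ z_{n-3} z_{n-2}` for `1 ≤ n ≤ m-1`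
(`n` denoting the single letter `n`), and
`zₙ = z_{n-2} z_{n-3} ⋯ z_{n-(m-1)} z_{n-m} z_{n-(m+1)} z_{n-m} z_{n-(m-1)} ⋯ z_{n-3} z_{n-2}`
for `n ≥ m`. -/
def zsw (m k : ℕ) : List ℕ := zsAux m (k + 1) k
/-- For `n ≥ m-2`, `Qword m n` is the word
`Q(n) = z_{n-(m-1)} z_{n-(m-2)} ⋯ z_{n-1} zₙ z_{n-1} ⋯ z_{n-(m-2)} z_{n-(m-1)}`
(in the shifted indexing `zₖ = zsw m (k+1)`). -/
def Qword (m n : ℕ) : List ℕ :=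
  (((List.range (m - 1)).map (fun j => zsw m (n + 2 - m + j))).flatten)
    ++ zsw m (n + 1)
    ++ (((List.range (m - 1)).map (fun j => zsw m (n - j))).flatten)

/-- The word `p_m = z_0 z_1 ⋯ z_{m-3} z_{m-2} z_{m-3} ⋯ z_1 z_0 · (m-1)`. -/
def pword (m : ℕ) : List ℕ :=
  (((List.range (m - 2)).map (fun j => zsw m (j + 1))).flatten)
    ++ zsw m (m - 1)
    ++ (((List.range (m - 2)).map (fun j => zsw m (m - 2 - j))).flatten)
    ++ [m - 1]

/-- For `n ≥ m-2`, the prefix `g_n = p_m · ∏_{m-2 ≤ k ≤ n-1} Q(k)` of the `m`-bonacci word. -/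
def gwordM (m n : ℕ) : List ℕ :=
  pword m ++ (((List.range (n - (m - 2))).map (fun j => Qword m (m - 2 + j))).flatten)

/-!
Write `ζ k = zsw m k` (so `ζ (k+1) = z_k`) and `b = n + 2 - m ≥ 1`. The morphism carries each
singular word to the next one up to a parity correction: `φ_m(ζ k) δ_k = δ_{k+1} ζ (k+1)`,
where `δ_k = parityPad k` is `0` for even `k` and empty for odd `k`. Since every `0` of a
`φ_m`-image starts a codeword, a nonempty suffix of `ζ k` that is also a prefix of `ζ (k+1)`
pulls back (after a reversal when `k` is odd, all `ζ k` being palindromes) to such a word for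
`k - 1`, and there is none for `k = 1`.

The two infinite words of the hypothesis begin with `ζ b ζ (b+1)` and `ζ (b+2)`, which disagree
inside both, so `w` is a proper prefix of `ζ b ζ (b+1)` and a prefix of `ζ (b+2)`. If `Q(n+1) w`
were a palindrome, `w` reversed would be comparable with the prefix `ζ (b+1)` of `Q(n+1)`. Then
either `w` is a suffix of `ζ (b+1)` and a prefix of `ζ (b+2)`, or `w = v ζ (b+1)` and `ζ b` ends
with a nonempty prefix of `ζ (b+1)`; both are excluded by the first paragraph.
-/

section Words

variable {α : Type*}

theorem prefix_of_prefix_append_of_not_prefix {w x y s t : List α}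
    (hxy : ¬ x <+: y) (hyx : ¬ y <+: x) (hwx : w <+: x ++ s) (hwy : w <+: y ++ t) :
    w <+: x ∧ ¬ x <+: w := by
  have hx_not : ¬ x <+: w := fun hxw =>
    (List.prefix_or_prefix_of_prefix (hxw.trans hwy) (List.prefix_append y t)).elim hxy hyx
  exact ⟨(List.prefix_or_prefix_of_prefix hwx (List.prefix_append x s)).resolve_right hx_not,
    hx_not⟩

theorem not_prefix_of_append_prefix {G x y X Y : List α} (hxy : ¬ x <+: y) (hyx : ¬ y <+: x)
    (hX : G ++ x <+: X) (hY : G ++ y <+: Y) : ¬ X <+: Y := fun h =>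
  (List.prefix_or_prefix_of_prefix (hX.trans h) hY).elim
    (fun h' => hxy ((List.prefix_append_right_inj G).mp h'))
    (fun h' => hyx ((List.prefix_append_right_inj G).mp h'))

theorem exists_suffix_prefix_of_append_prefix_append {v x y : List α}
    (h : v ++ y <+: x ++ y) (hne : ¬ x ++ y <+: v ++ y) (hxy : x.length ≤ y.length) :
    ∃ s ≠ [], s <:+ x ∧ s <+: y := by
  have hvx_len : v.length < x.length := by
    have hle := h.length_le
    simp only [List.length_append] at hle
    refine lt_of_le_of_ne (by omega) fun hlen => hne ?_
    rw [h.eq_of_length (by simp [hlen])]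
  obtain ⟨s, rfl⟩ : v <+: x :=
    List.prefix_of_prefix_length_le ((List.prefix_append v y).trans h)
      (List.prefix_append x y) hvx_len.le
  rw [List.append_assoc, List.prefix_append_right_inj] at h
  refine ⟨s, fun hs => by simp [hs] at hvx_len, List.suffix_append v s, ?_⟩
  simp only [List.length_append] at hxy
  exact List.prefix_of_prefix_length_le (List.prefix_append s y) h (by omega)

theorem exists_prefix_append_of_prefix_flatten {w x y : List α} {f : ℕ → List α} {T : ℕ}
    (hy : y <+: f 0) (h : w <+: x ++ ((List.range T).map f).flatten) :
    ∃ s, w <+: x ++ y ++ s := by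
  cases T with
  | zero =>
    simp only [List.range_zero, List.map_nil, List.flatten_nil, List.append_nil] at h
    exact ⟨[], by simpa using h.trans (List.prefix_append x y)⟩
  | succ T =>
    obtain ⟨r, hr⟩ := hy
    refine ⟨r ++ ((List.range T).map (f ∘ Nat.succ)).flatten, ?_⟩
    simpa [List.range_succ_eq_map, ← hr] using h

end Words

section Morphism

variable {m : ℕ}

theorem phiL_eq_cons_zero (m a : ℕ) : ∃ t, phiL m a = 0 :: t := by
  unfold phiL
  split <;> exact ⟨_, rfl⟩

theorem phiL_zero (hm : 2 ≤ m) : phiL m 0 = [0, 1] := by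
  simp only [phiL, ite_eq_right_iff]
  omega

theorem phiW_cons (a : ℕ) (u : List ℕ) : phiW m (a :: u) = phiL m a ++ phiW m u := rfl

theorem phiW_append (u v : List ℕ) : phiW m (u ++ v) = phiW m u ++ phiW m v :=
  List.flatMap_append

theorem phiW_eq_nil_or_eq_cons_zero (u : List ℕ) : phiW m u = [] ∨ ∃ t, phiW m u = 0 :: t := by
  cases u with
  | nil => exact Or.inl rfl
  | cons a u =>
    obtain ⟨t, ht⟩ := phiL_eq_cons_zero m a
    exact Or.inr ⟨t ++ phiW m u, by simp [phiW_cons, ht]⟩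

theorem phiW_append_zero_eq_cons_zero (u : List ℕ) : ∃ t, phiW m u ++ [0] = 0 :: t := by
  rcases phiW_eq_nil_or_eq_cons_zero (m := m) u with h | ⟨t, h⟩
  · exact ⟨[], by rw [h]; rfl⟩
  · exact ⟨t ++ [0], by rw [h]; rfl⟩

theorem length_le_length_phiW (u : List ℕ) : u.length ≤ (phiW m u).length := by
  induction u with
  | nil => simp [phiW]
  | cons a u ih =>
    obtain ⟨t, ht⟩ := phiL_eq_cons_zero m a
    simp only [phiW_cons, ht, List.length_append, List.length_cons]
    omega

theorem exists_suffix_phiW_eq_cons_zero {u v : List ℕ} (h : 0 :: v <:+ phiW m u) :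
    ∃ u', u' <:+ u ∧ phiW m u' = 0 :: v := by
  induction u with
  | nil => simp [phiW] at h
  | cons a u ih =>
    have tail : 0 :: v <:+ phiW m u → ∃ u', u' <:+ a :: u ∧ phiW m u' = 0 :: v := fun h' =>
      let ⟨u', hu', e⟩ := ih h'
      ⟨u', hu'.trans (List.suffix_cons a u), e⟩
    by_cases ha : a = m - 1
    · rw [phiW_cons, phiL, if_pos ha, List.singleton_append, List.suffix_cons_iff] at h
      rcases h with h | h
      · exact ⟨a :: u, List.suffix_refl _, by rw [phiW_cons, phiL, if_pos ha, h]; rfl⟩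
      · exact tail h
    · rw [phiW_cons, phiL, if_neg ha, List.cons_append, List.cons_append, List.nil_append,
        List.suffix_cons_iff, List.suffix_cons_iff] at h
      rcases h with h | h | h
      · exact ⟨a :: u, List.suffix_refl _, by rw [phiW_cons, phiL, if_neg ha, h]; rfl⟩
      · simp at h
      · exact tail h

theorem phiL_append_prefix_phiL_append {c d : ℕ} {u t : List ℕ}
    (hu : u = [] ∨ ∃ u', u = 0 :: u') (hc : u = [] → c ≠ m - 1)
    (h : phiL m c ++ u <+: phiL m d ++ 0 :: t) : c = d ∧ u <+: 0 :: t := by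
  by_cases hcm : c = m - 1 <;> by_cases hdm : d = m - 1
  · simpa [phiL, hcm, hdm] using h
  · simp only [phiL, hcm, hdm, if_true, if_false, List.cons_append, List.nil_append,
      List.cons_prefix_cons, true_and] at h
    rcases hu with rfl | ⟨u', rfl⟩
    · exact absurd hcm (hc rfl)
    · simp at h
  · simp [phiL, hcm, hdm] at h
  · simp only [phiL, hcm, hdm, if_false, List.cons_append, List.nil_append,
      List.cons_prefix_cons, true_and, Nat.add_right_cancel_iff] at h
    exact h

theorem prefix_of_phiW_prefix_phiW_append_zero {x y : List ℕ}
    (hx : x.getLast? ≠ some (m - 1)) (h : phiW m x <+: phiW m y ++ [0]) : x <+: y := by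
  induction x generalizing y with
  | nil => exact List.nil_prefix
  | cons c x ih =>
    have hx' : x.getLast? ≠ some (m - 1) := by
      cases x with
      | nil => simp
      | cons => rwa [List.getLast?_cons_cons] at hx
    have hc : x = [] → c ≠ m - 1 := by rintro rfl; simpa using hx
    have hφx : phiW m x = [] → x = [] := fun h0 => by
      simpa [h0] using length_le_length_phiW (m := m) x
    cases y with
    | nil =>
      by_cases hcm : c = m - 1
      · rw [phiW_cons, phiL, if_pos hcm] at h
        exact absurd hcm (hc (hφx (by simpa [phiW] using h)))
      · simpa [phiL, hcm, phiW] using h.length_le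
    | cons d y =>
      obtain ⟨t, ht⟩ := phiW_append_zero_eq_cons_zero (m := m) y
      rw [phiW_cons, phiW_cons, List.append_assoc, ht] at h
      obtain ⟨rfl, h'⟩ := phiL_append_prefix_phiL_append
        (phiW_eq_nil_or_eq_cons_zero x) (fun hx0 => hc (hφx hx0)) h
      exact List.cons_prefix_cons.mpr ⟨rfl, ih hx' (ht ▸ h')⟩

theorem exists_suffix_prefix_of_phiW (hm : 2 ≤ m) {p q s : List ℕ}
    (hp : p.getLast? = some 0) (hs : s ≠ []) (hsp : s <:+ phiW m p)
    (hsq : s <+: phiW m q ++ [0]) : ∃ u ≠ [], u <:+ p ∧ u <+: q := by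
  obtain ⟨t, ht⟩ := phiW_append_zero_eq_cons_zero (m := m) q
  obtain ⟨v, rfl⟩ : ∃ v, s = 0 :: v := by
    rw [ht, List.prefix_cons_iff] at hsq
    rcases hsq with h | ⟨v, hv, -⟩
    · exact absurd h hs
    · exact ⟨v, hv⟩
  obtain ⟨u, hu, hφu⟩ := exists_suffix_phiW_eq_cons_zero hsp
  have hu_ne : u ≠ [] := by
    rintro rfl
    simp [phiW] at hφu
  have hlast : u.getLast? = some 0 := by
    rw [List.getLast?_eq_some_getLast hu_ne, hu.getLast hu_ne,
      ← List.getLast?_eq_some_getLast, hp]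
  refine ⟨u, hu_ne, hu, prefix_of_phiW_prefix_phiW_append_zero ?_ (hφu ▸ hsq)⟩
  rw [hlast]
  simp only [ne_eq, Option.some.injEq]
  omega

end Morphism

section SingularWords

variable {m : ℕ}

theorem zsAux_eq_zsw : ∀ {K j : ℕ}, j < K → zsAux m K j = zsw m j
  | K + 1, j, h => by
    rcases Nat.lt_or_ge j K with hj | hj
    · rw [zsAux, if_pos hj, zsAux_eq_zsw hj]
    · obtain rfl : j = K := by omega
      rfl

theorem zsw_zero : zsw m 0 = [] := rfl

theorem zsw_one : zsw m 1 = [0] := rfl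

def zswNest (m a r : ℕ) (x : List ℕ) : List ℕ :=
  (List.range' a r).reverse.flatMap (zsw m) ++ x ++ (List.range' a r).flatMap (zsw m)

theorem zswNest_zero (a : ℕ) (x : List ℕ) : zswNest m a 0 x = x := by
  simp [zswNest]

theorem zswNest_succ (a r : ℕ) (x : List ℕ) :
    zswNest m a (r + 1) x = zsw m (a + r) ++ zswNest m a r x ++ zsw m (a + r) := by
  simp [zswNest, List.range'_concat]

theorem zswNest_succ_eq_zswNest_zsw (a r : ℕ) (x : List ℕ) :
    zswNest m a (r + 1) x = zswNest m (a + 1) r (zsw m a ++ x ++ zsw m a) := by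
  simp [zswNest, List.range'_succ]

theorem map_zsAux_eq_map_zsw {K r : ℕ} {f g : ℕ → ℕ} (h : ∀ j < r, f j < K ∧ f j = g j) :
    (List.range r).map (fun j => zsAux m K (f j)) = (List.range r).map (zsw m ∘ g) :=
  List.map_congr_left fun j hj => by
    obtain ⟨hK, hfg⟩ := h j (List.mem_range.mp hj)
    rw [Function.comp_apply, zsAux_eq_zsw hK, hfg]

theorem zsw_of_le {i : ℕ} (h2 : 2 ≤ i) (hi : i ≤ m) : zsw m i = zswNest m 1 (i - 2) [i - 1] := by
  rw [zsw, zsAux, if_neg (by omega), if_neg (by omega), if_neg (by omega), if_pos hi, zswNest,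
    List.reverse_range', List.range'_eq_map_range, List.flatMap_def, List.flatMap_def,
    List.map_map, List.map_map,
    map_zsAux_eq_map_zsw (g := fun j => 1 + (i - 2) - 1 - j) (fun j hj => ⟨by omega, by omega⟩),
    map_zsAux_eq_map_zsw (fun j hj => ⟨by omega, rfl⟩)]

theorem zsw_of_lt (hm : 2 ≤ m) {i : ℕ} (hi : m < i) :
    zsw m i = zswNest m (i - m) (m - 1) (zsw m (i - m - 1)) := by
  obtain ⟨r, hr⟩ : ∃ r, m - 1 = r + 1 := ⟨m - 2, by omega⟩
  have hr' : m - 2 = r := by omega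
  rw [hr, zswNest_succ_eq_zswNest_zsw, zsw, zsAux, if_neg (by omega), if_neg (by omega),
    if_neg (by omega), if_neg (by omega), zswNest, List.reverse_range',
    List.range'_eq_map_range, List.flatMap_def, List.flatMap_def, List.map_map, List.map_map,
    zsAux_eq_zsw (by omega), zsAux_eq_zsw (by omega), hr',
    map_zsAux_eq_map_zsw (g := fun j => i - m + 1 + r - 1 - j) (fun j hj => ⟨by omega, by omega⟩),
    map_zsAux_eq_map_zsw (g := fun j => i - m + 1 + j) (fun j hj => ⟨by omega, by omega⟩)]
  simp only [List.append_assoc]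

theorem zsw_two (hm : 2 ≤ m) : zsw m 2 = [1] := by
  rw [zsw_of_le le_rfl hm]
  rfl

theorem zswNest_reverse {a r : ℕ} {x : List ℕ}
    (hz : ∀ j < r, (zsw m (a + j)).reverse = zsw m (a + j)) (hx : x.reverse = x) :
    (zswNest m a r x).reverse = zswNest m a r x := by
  induction r with
  | zero => rwa [zswNest_zero]
  | succ r ih =>
    rw [zswNest_succ]
    simp only [List.reverse_append, List.append_assoc, hz r (by omega),
      ih fun j hj => hz j (by omega)]

theorem zsw_reverse (hm : 2 ≤ m) (k : ℕ) : (zsw m k).reverse = zsw m k := by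
  induction k using Nat.strong_induction_on with
  | _ k ih =>
    rcases Nat.lt_or_ge k 2 with hk | hk
    · interval_cases k <;> rfl
    rcases Nat.lt_or_ge m k with hmk | hkm
    · rw [zsw_of_lt hm hmk]
      exact zswNest_reverse (fun j hj => ih _ (by omega)) (ih _ (by omega))
    · rw [zsw_of_le hk hkm]
      exact zswNest_reverse (fun j hj => ih _ (by omega)) rfl

def parityPad (i : ℕ) : List ℕ := if Even i then [0] else []

theorem parityPad_add_two (i : ℕ) : parityPad (i + 2) = parityPad i := by
  simp [parityPad, Nat.even_add]

def PhiShift (m i : ℕ) (x y : List ℕ) : Prop :=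
  phiW m x ++ parityPad i = parityPad (i + 1) ++ y

theorem phiShift_add_two_iff {i : ℕ} {x y : List ℕ} :
    PhiShift m (i + 2) x y ↔ PhiShift m i x y := by
  rw [PhiShift, PhiShift, parityPad_add_two, show i + 2 + 1 = i + 1 + 2 by omega,
    parityPad_add_two]

theorem PhiShift.wrap {a : ℕ} {x y u v : List ℕ} (hx : PhiShift m (a + 1) x y)
    (hu : PhiShift m a u v) : PhiShift m a (u ++ x ++ u) (v ++ y ++ v) := by
  unfold PhiShift at *
  calc phiW m (u ++ x ++ u) ++ parityPad a
      = phiW m u ++ (phiW m x ++ parityPad (a + 1)) ++ v := by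
        simp only [phiW_append, List.append_assoc, hu]
    _ = (phiW m u ++ parityPad a) ++ y ++ v := by
        rw [hx, parityPad_add_two]
        simp only [List.append_assoc]
    _ = parityPad (a + 1) ++ (v ++ y ++ v) := by
        rw [hu]
        simp only [List.append_assoc]

theorem PhiShift.zswNest {a r : ℕ} {x y : List ℕ} (hx : PhiShift m (a + 1) x y)
    (hz : ∀ j < r, PhiShift m (a + j) (zsw m (a + j)) (zsw m (a + j + 1))) :
    PhiShift m (a + r + 1) (zswNest m a r x) (zswNest m (a + 1) r y) := by
  induction r with
  | zero => simpa [zswNest_zero] using hx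
  | succ r ih =>
    rw [zswNest_succ, zswNest_succ, show a + 1 + r = a + r + 1 by omega,
      show a + (r + 1) + 1 = a + r + 2 by omega, phiShift_add_two_iff]
    exact (ih fun j hj => hz j (by omega)).wrap (hz r (by omega))

theorem zsw_succ_eq_zswNest_two (hm : 2 ≤ m) {k : ℕ} (h2 : 2 ≤ k) (hk : k ≤ m) :
    zsw m (k + 1) = zswNest m 2 (k - 2) (zsw m 1 ++ (if k = m then [] else [k]) ++ zsw m 1) := by
  obtain ⟨r, hr⟩ : ∃ r, k - 1 = r + 1 := ⟨k - 2, by omega⟩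
  by_cases hkm : k = m
  · rw [zsw_of_lt hm (by omega), show k + 1 - m - 1 = 0 by omega, show k + 1 - m = 1 by omega,
      show m - 1 = r + 1 by omega, zswNest_succ_eq_zswNest_zsw, zsw_zero,
      if_pos hkm, show r = k - 2 by omega]
  · rw [zsw_of_le (by omega) (by omega), show k + 1 - 2 = r + 1 by omega,
      zswNest_succ_eq_zswNest_zsw, if_neg hkm, show r = k - 2 by omega,
      show k + 1 - 1 = k by omega]

theorem phiShift_zsw (hm : 2 ≤ m) (k : ℕ) : PhiShift m k (zsw m k) (zsw m (k + 1)) := by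
  induction k using Nat.strong_induction_on with
  | _ k ih =>
    rcases Nat.lt_or_ge k 2 with hk | hk
    · interval_cases k
      · simp [PhiShift, parityPad, zsw_zero, zsw_one, phiW]
      · simp [PhiShift, parityPad, zsw_one, zsw_two hm, phiW, phiL_zero hm]
    rcases Nat.lt_or_ge m k with hmk | hkm
    · have hcenter := ih (k - m - 1) (by omega)
      rw [← phiShift_add_two_iff, show k - m - 1 + 2 = k - m + 1 by omega] at hcenter
      have h := hcenter.zswNest (r := m - 1) fun j hj => ih (k - m + j) (by omega)
      rwa [show k - m + (m - 1) + 1 = k by omega, ← zsw_of_lt hm hmk,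
        show k - m + 1 = k + 1 - m by omega, show k - m - 1 + 1 = k + 1 - m - 1 by omega,
        ← zsw_of_lt hm (by omega)] at h
    · have hcenter : PhiShift m (1 + 1) [k - 1] (zsw m 1 ++ (if k = m then [] else [k]) ++ zsw m 1) := by
        by_cases hkm' : k = m
        · simp [PhiShift, parityPad, Nat.even_iff, phiW, phiL, zsw_one, hkm']
        · simp [PhiShift, parityPad, Nat.even_iff, phiW, phiL, zsw_one, hkm',
            show k - 1 ≠ m - 1 by omega, show k - 1 + 1 = k by omega]
      have h := hcenter.zswNest (r := k - 2) fun j hj => ih (1 + j) (by omega)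
      rwa [show 1 + (k - 2) + 1 = k by omega, ← zsw_of_le hk hkm,
        ← zsw_succ_eq_zswNest_two hm hk hkm] at h

theorem zsw_succ_of_even (hm : 2 ≤ m) {k : ℕ} (hk : Even k) :
    zsw m (k + 1) = phiW m (zsw m k) ++ [0] := by
  have h := phiShift_zsw hm k
  simp only [PhiShift, parityPad, hk, Nat.even_add_one, if_true, not_true, if_false,
    List.nil_append] at h
  exact h.symm

theorem phiW_zsw_of_odd (hm : 2 ≤ m) {k : ℕ} (hk : Odd k) :
    phiW m (zsw m k) = 0 :: zsw m (k + 1) := by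
  have h := phiShift_zsw hm k
  simpa [PhiShift, parityPad, Nat.not_even_iff_odd.mpr hk, Nat.even_add_one] using h

theorem getLast?_zsw_of_odd (hm : 2 ≤ m) {k : ℕ} (hk : Odd k) :
    (zsw m k).getLast? = some 0 := by
  obtain ⟨j, rfl⟩ := hk
  rw [zsw_succ_of_even hm (even_two_mul j), List.getLast?_append]
  simp

theorem length_zsw_le_succ (hm : 2 ≤ m) (k : ℕ) : (zsw m k).length ≤ (zsw m (k + 1)).length := by
  rcases Nat.even_or_odd k with hk | hk
  · rw [zsw_succ_of_even hm hk, List.length_append]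
    exact (length_le_length_phiW _).trans (Nat.le_add_right _ _)
  · obtain ⟨j, rfl⟩ := hk
    have h := congrArg List.length (phiW_zsw_of_odd hm (odd_two_mul_add_one j))
    rw [zsw_succ_of_even hm (even_two_mul j)] at h ⊢
    have h0 : (phiW m [0]).length = 2 := by simp [phiW, phiL_zero hm]
    have := length_le_length_phiW (m := m) (phiW m (zsw m (2 * j)))
    simp only [phiW_append, List.length_append, List.length_cons, List.length_nil, h0] at h ⊢
    omega

theorem zsw_suffix_not_prefix_succ (hm : 2 ≤ m) {k : ℕ} (hk : 1 ≤ k) {s : List ℕ} (hs : s ≠ [])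
    (hsk : s <:+ zsw m k) : ¬ s <+: zsw m (k + 1) := by
  induction k using Nat.strong_induction_on generalizing s with
  | _ k ih =>
    intro hsk1
    obtain ⟨j, rfl⟩ : ∃ j, k = j + 1 := ⟨k - 1, by omega⟩
    rcases Nat.even_or_odd j with hj | hj
    · rcases Nat.eq_zero_or_pos j with rfl | hj0
      · obtain rfl : s = [0] := by
          rw [zsw_one, List.suffix_cons_iff] at hsk
          simpa [hs] using hsk
        simp [zsw_two hm] at hsk1
      have hj1 : Odd (j + 1) := hj.add_one
      obtain ⟨u, hu, husuf, hupre⟩ := exists_suffix_prefix_of_phiW hm (getLast?_zsw_of_odd hm hj1)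
        (List.reverse_ne_nil_iff.mpr hs)
        (by
          rw [phiW_zsw_of_odd hm hj1]
          exact (zsw_reverse hm _ ▸ List.reverse_suffix.mpr hsk1).trans (List.suffix_cons _ _))
        (by rw [← zsw_succ_of_even hm hj]; exact zsw_reverse hm _ ▸ List.reverse_prefix.mpr hsk)
      exact ih j (by omega) (by omega) (List.reverse_ne_nil_iff.mpr hu)
        (zsw_reverse hm _ ▸ List.reverse_suffix.mpr hupre)
        (zsw_reverse hm _ ▸ List.reverse_prefix.mpr husuf)
    · have hj1 : Even (j + 1) := hj.add_one
      obtain ⟨u, hu, husuf, hupre⟩ := exists_suffix_prefix_of_phiW hm (getLast?_zsw_of_odd hm hj) hs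
        (by rw [phiW_zsw_of_odd hm hj]; exact hsk.trans (List.suffix_cons _ _))
        (by rwa [← zsw_succ_of_even hm hj1])
      exact ih j (by omega) (by obtain ⟨i, rfl⟩ := hj; omega) hu husuf hupre

theorem exists_prefix_zsw_append_zsw_of_lt (hm : 2 ≤ m) {b : ℕ} (hb : 1 ≤ b) (hbm : b < m) :
    ∃ D c, c ≠ b ∧ D ++ [b] <+: zsw m b ++ zsw m (b + 1) ∧ D ++ [c] <+: zsw m (b + 2) := by
  obtain ⟨r, rfl⟩ : ∃ r, b = r + 1 := ⟨b - 1, by omega⟩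
  set D := (List.range' 1 (r + 1)).reverse.flatMap (zsw m)
  have hX : D ++ [r + 1] <+: zsw m (r + 1) ++ zsw m (r + 1 + 1) := by
    rw [zsw_of_le (i := r + 1 + 1) (by omega) (by omega)]
    simp [D, zswNest, List.range'_concat, Nat.add_comm 1 r]
  by_cases hbm' : r + 1 + 2 ≤ m
  · refine ⟨D, r + 2, by omega, hX, ?_⟩
    rw [zsw_of_le (by omega) hbm']
    simp [D, zswNest]
  · refine ⟨D, 0, by omega, hX, ?_⟩
    rw [zsw_of_lt hm (by omega), show r + 1 + 2 - m - 1 = 0 by omega,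
      show r + 1 + 2 - m = 1 by omega, show m - 1 = r + 1 by omega]
    simp [D, zswNest, List.range'_succ, zsw_zero, zsw_one]

theorem exists_prefix_zsw_append_zsw_add (hm : 2 ≤ m) (c : ℕ) :
    ∃ G, G ++ (zsw m c ++ zsw m (c + 1)) <+: zsw m (c + m) ++ zsw m (c + m + 1) ∧
      G ++ zsw m (c + 2) <+: zsw m (c + m + 2) := by
  obtain ⟨M, hM⟩ : ∃ M, m - 1 = M + 1 := ⟨m - 2, by omega⟩
  set G := (List.range' (c + 1) (M + 2)).reverse.flatMap (zsw m)
  refine ⟨G, ?_, ?_⟩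
  · have hG : G = zsw m (c + m) ++ (List.range' (c + 1) (M + 1)).reverse.flatMap (zsw m) := by
      simp [G, List.range'_concat (s := c + 1) (n := M + 1),
        show c + 1 + (M + 1) = c + m by omega]
    rw [hG, zsw_of_lt (i := c + m + 1) hm (by omega), show c + m + 1 - m - 1 = c by omega,
      show c + m + 1 - m = c + 1 by omega, hM, zswNest]
    simp only [List.append_assoc, List.prefix_append_right_inj]
    simp [List.range'_succ (s := c + 1)]
  · rw [zsw_of_lt (i := c + m + 2) hm (by omega), show c + m + 2 - m - 1 = c + 1 by omega,
      show c + m + 2 - m = c + 2 by omega, hM, zswNest]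
    simp [G, List.range'_succ]

theorem zsw_append_zsw_not_prefix (hm : 2 ≤ m) (b : ℕ) :
    ¬ zsw m b ++ zsw m (b + 1) <+: zsw m (b + 2) ∧
      ¬ zsw m (b + 2) <+: zsw m b ++ zsw m (b + 1) := by
  induction b using Nat.strong_induction_on with
  | _ b ih =>
    rcases Nat.eq_zero_or_pos b with rfl | hb
    · simp [zsw_zero, zsw_one, zsw_two hm]
    rcases Nat.lt_or_ge b m with hbm | hbm
    · obtain ⟨D, c, hc, hX, hY⟩ := exists_prefix_zsw_append_zsw_of_lt hm hb hbm
      have h₁ : ¬ [b] <+: [c] := by simpa using hc.symm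
      have h₂ : ¬ [c] <+: [b] := by simpa using hc
      exact ⟨not_prefix_of_append_prefix h₁ h₂ hX hY, not_prefix_of_append_prefix h₂ h₁ hY hX⟩
    · obtain ⟨c, rfl⟩ : ∃ c, b = c + m := ⟨b - m, by omega⟩
      obtain ⟨G, hX, hY⟩ := exists_prefix_zsw_append_zsw_add hm c
      obtain ⟨h₁, h₂⟩ := ih c (by omega)
      exact ⟨not_prefix_of_append_prefix h₁ h₂ hX hY, not_prefix_of_append_prefix h₂ h₁ hY hX⟩

theorem zsw_prefix_Qword (hm : 2 ≤ m) (n : ℕ) : zsw m (n + 2 - m) <+: Qword m n := by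
  rw [Qword, show m - 1 = (m - 2) + 1 by omega, List.range_succ_eq_map]
  simp only [List.map_cons, List.flatten_cons, Nat.add_zero, List.append_assoc]
  exact List.prefix_append _ _

theorem zsw_succ_incomparable_reverse (hm : 2 ≤ m) {b : ℕ} (hb : 1 ≤ b) {w : List ℕ}
    (hw : w ≠ []) (h₁ : w <+: zsw m b ++ zsw m (b + 1))
    (h₁' : ¬ zsw m b ++ zsw m (b + 1) <+: w) (h₂ : w <+: zsw m (b + 2)) :
    ¬ w.reverse <+: zsw m (b + 1) ∧ ¬ zsw m (b + 1) <+: w.reverse := by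
  constructor
  · intro h
    refine zsw_suffix_not_prefix_succ hm (by omega) hw ?_ h₂
    simpa [zsw_reverse hm] using List.reverse_suffix.mpr h
  · rintro ⟨v, hv⟩
    have hw' : w = v.reverse ++ zsw m (b + 1) := by
      rw [← List.reverse_reverse w, ← hv, List.reverse_append, zsw_reverse hm]
    rw [hw'] at h₁ h₁'
    obtain ⟨s, hs, hsb, hsb1⟩ :=
      exists_suffix_prefix_of_append_prefix_append h₁ h₁' (length_zsw_le_succ hm b)
    exact zsw_suffix_not_prefix_succ hm hb hs hsb hsb1

end SingularWords

/-- Let `n ≥ m-1` and let `w` be a non-empty common finite prefix of the infinite words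
`z_{n-(m-1)} · Q(n+1) Q(n+2) Q(n+3) ⋯` and `Q(n+2) Q(n+3) Q(n+4) ⋯` (equivalently, `w`
is a prefix of some finite truncation of each of them). Then `Q(n+1) · w` is not a
palindrome. -/
theorem Qword_append_not_pal (m : ℕ) (hm : 2 ≤ m) (n : ℕ) (hn : m - 1 ≤ n)
    (w : List ℕ) (hw : w ≠ [])
    (h1 : ∃ T, w <+: zsw m (n + 2 - m)
      ++ (((List.range T).map (fun j => Qword m (n + 1 + j))).flatten))
    (h2 : ∃ T, w <+: (((List.range T).map (fun j => Qword m (n + 2 + j))).flatten)) :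
    ¬ Pal (Qword m (n + 1) ++ w) := by
  intro hpal
  set b := n + 2 - m
  have hQ₁ : zsw m (b + 1) <+: Qword m (n + 1) :=
    show n + 1 + 2 - m = b + 1 by omega ▸ zsw_prefix_Qword hm (n + 1)
  have hQ₂ : zsw m (b + 2) <+: Qword m (n + 2) :=
    show n + 2 + 2 - m = b + 2 by omega ▸ zsw_prefix_Qword hm (n + 2)
  obtain ⟨T₁, hT₁⟩ := h1
  obtain ⟨T₂, hT₂⟩ := h2
  obtain ⟨s₁, hs₁⟩ := exists_prefix_append_of_prefix_flatten hQ₁ hT₁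
  obtain ⟨s₂, hs₂⟩ := exists_prefix_append_of_prefix_flatten (x := []) hQ₂ hT₂
  rw [List.nil_append] at hs₂
  obtain ⟨hnot₁, hnot₂⟩ := zsw_append_zsw_not_prefix hm b
  obtain ⟨hw₁, hw₁'⟩ := prefix_of_prefix_append_of_not_prefix hnot₁ hnot₂ hs₁ hs₂
  obtain ⟨hw₂, -⟩ := prefix_of_prefix_append_of_not_prefix hnot₂ hnot₁ hs₂ hs₁
  have hrev : w.reverse <+: Qword m (n + 1) ++ w := by
    rw [← show (Qword m (n + 1) ++ w).reverse = _ from hpal, List.reverse_append]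
    exact List.prefix_append _ _
  obtain ⟨hr₁, hr₂⟩ := zsw_succ_incomparable_reverse hm (by omega) hw hw₁ hw₁' hw₂
  exact (List.prefix_or_prefix_of_prefix hrev (hQ₁.trans (List.prefix_append _ _))).elim hr₁ hr₂
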